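/- Fix an initial state ξ in 𝔹_T^N and let φ : 𝔹^N → ℝ satisfy φ(𝐀) = φ(𝐁) = 0. Then the series Σ_{t=0}^∞ E[φ(x^t) | x⁰ = ξ] converges absolutely, and the expectation of φ under the stationary distribution π_⟲(ξ) of the amended chain is differentiable in u at u = 0 with (d/du)|_{u=0} E_{π_⟲(ξ)}[φ] = Σ_{t=0}^∞ E[φ(x^t) | x⁰ = ξ]. -/

import Mathlib

/-!
Restricted to the transient states, the chain has a substochastic transition block `Q`. Since
the states `𝐀` and `𝐁` are absorbing, `Q ^ t` is the transient block of `P ^ t`, and the Fixation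
Axiom makes some power of `Q` strictly substochastic, so `∑ Q ^ t` converges to the fundamental
matrix `F = (1 - Q)⁻¹`; as `φ` vanishes off the transient states,
`∑_t E[φ(x^t) | x⁰ = ξ] = ∑_y F ξ y * φ y =: G`.

On the transient states a stationary distribution `q` of the amended chain satisfies
`q = q Q + u c e_ξ`, where `c` is its mass on `{𝐀, 𝐁}`. Hence `q = u c F ξ`, and normalisation
gives `c (1 + u K) = 1` with `K = ∑_y F ξ y`. So the stationary expectation of `φ` is
`u G / (1 + u K)`, whose derivative at `u = 0` is `G`.
-/

open Finset Filter Asymptotics Topology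

namespace Evo

/-- A population state: each of the `N` individuals has type `A` (`true`) or `B` (`false`). -/
abbrev St (N : ℕ) := Fin N → Bool

/-- A replacement event `(R, α)`: the set `R` of replaced individuals together with a
parentage map (only the values on `R` are relevant). -/
abbrev Event (N : ℕ) := Finset (Fin N) × (Fin N → Fin N)

/-- The extended parentage map `α̃`, equal to `α` on `R` and the identity off `R`. -/
def extMap {N : ℕ} (e : Event N) (i : Fin N) : Fin N := if i ∈ e.1 then e.2 i else i

/-- The state update induced by a replacement event: `x ↦ x_α̃`. -/
def upd {N : ℕ} (e : Event N) (x : St N) : St N := fun i => x (extMap e i)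

/-- Boolean values as reals. -/
def bv (b : Bool) : ℝ := if b then 1 else 0

/-- The all-`A` state. -/
def stA (N : ℕ) : St N := fun _ => true

/-- The all-`B` state. -/
def stB (N : ℕ) : St N := fun _ => false

/-- Transient (non-monoallelic) states, i.e. members of `𝔹_T^N`. -/
def Transient {N : ℕ} (x : St N) : Prop := x ≠ stA N ∧ x ≠ stB N

/-- A replacement rule: for each state, a probability distribution over replacement events. -/
def IsRule {N : ℕ} (p : St N → Event N → ℝ) : Prop :=
  (∀ x e, 0 ≤ p x e) ∧ ∀ x, ∑ e : Event N, p x e = 1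

/-- A state-independent distribution over replacement events (a neutral replacement rule). -/
def IsDist {N : ℕ} (p0 : Event N → ℝ) : Prop :=
  (∀ e, 0 ≤ p0 e) ∧ ∑ e : Event N, p0 e = 1

/-- Transition matrix of the Markov chain induced by a replacement rule. -/
def tmat {N : ℕ} (p : St N → Event N → ℝ) : Matrix (St N) (St N) ℝ :=
  Matrix.of fun x y => ∑ e : Event N, if upd e x = y then p x e else 0

/-- The Fixation Axiom. -/
def FixAxiom {N : ℕ} (p : St N → Event N → ℝ) : Prop :=
  ∃ (i : Fin N) (m : ℕ) (ev : Fin m → Event N), 1 ≤ m ∧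
    (∀ k x, 0 < p x (ev k)) ∧ (∃ k, i ∈ (ev k).1) ∧
    (∀ j, (List.ofFn fun k => extMap (ev k)).foldr (· ∘ ·) id j = i)

/-- The sojourn time `t_ξ(x)`: expected number of visits to `x` prior to absorption,
starting from `ξ` (expressed as `Σ_t (P^t)(ξ, x)`). -/
noncomputable def sojourn {N : ℕ} (p : St N → Event N → ℝ) (ξ x : St N) : ℝ :=
  ∑' t : ℕ, (tmat p ^ t) ξ x

/-- The amended transition matrix `P^⟲(ξ)`. -/
def amend {N : ℕ} (p : St N → Event N → ℝ) (ξ : St N) (u : ℝ) : Matrix (St N) (St N) ℝ :=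
  Matrix.of fun x y =>
    if x = stA N ∨ x = stB N then (if y = ξ then u else (1 - u) * tmat p x y)
    else tmat p x y

/-- `q` is a stationary distribution for the transition matrix `P`. -/
def IsStat {N : ℕ} (P : Matrix (St N) (St N) ℝ) (q : St N → ℝ) : Prop :=
  (∀ x, 0 ≤ q x) ∧ (∑ x : St N, q x = 1) ∧ ∀ y, ∑ x : St N, q x * P x y = q y

/-- The operator `⟨φ⟩_ξ = Σ_{t=0}^∞ E[φ(x^t) | x⁰ = ξ]` for the chain with rule `p`. -/
noncomputable def sgen {N : ℕ} (p : St N → Event N → ℝ) (ξ : St N) (φ : St N → ℝ) : ℝ :=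
  ∑' t : ℕ, ∑ x : St N, (tmat p ^ t) ξ x * φ x

end Evo

theorem summable_pow_div {c : ℝ} (hc0 : 0 ≤ c) (hc1 : c < 1) {m : ℕ} (hm : m ≠ 0) :
    Summable fun t : ℕ => c ^ (t / m) := by
  have : NeZero m := ⟨hm⟩
  have hdiv (q : ℕ) (r : Fin m) : (q * m + r) / m = q := by
    rw [add_comm, Nat.add_mul_div_right _ _ (Nat.pos_of_ne_zero hm), Nat.div_eq_of_lt r.2,
      zero_add]
  rw [← (Nat.divModEquiv m).symm.summable_iff]
  simpa [Function.comp_def, hdiv] using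
    (summable_geometric_of_lt_one hc0 hc1).mul_of_nonneg
      (Summable.of_finite : Summable fun _ : Fin m => (1 : ℝ))
      (fun _ => pow_nonneg hc0 _) (fun _ => zero_le_one)

namespace Matrix

variable {ι : Type*} [Fintype ι] [DecidableEq ι]

section Restrict

variable {R : Type*} [Semiring R] {T : ι → Prop} [DecidablePred T] {P : Matrix ι ι R}

theorem pow_apply_eq_zero_of_not_of (hP : ∀ i j, ¬ T i → T j → P i j = 0) (t : ℕ) {i j : ι}
    (hi : ¬ T i) (hj : T j) : (P ^ t) i j = 0 := by
  induction t generalizing i with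
  | zero => exact one_apply_ne fun h => hi (h ▸ hj)
  | succ t ih =>
    rw [pow_succ', mul_apply]
    refine sum_eq_zero fun k _ => ?_
    by_cases hk : T k
    · rw [hP i k hi hk, zero_mul]
    · rw [ih hk, mul_zero]

theorem submatrix_val_pow (hP : ∀ i j, ¬ T i → T j → P i j = 0) (t : ℕ) :
    (P ^ t).submatrix (Subtype.val (p := T)) (Subtype.val (p := T)) =
      P.submatrix (Subtype.val (p := T)) (Subtype.val (p := T)) ^ t := by
  induction t with
  | zero => exact submatrix_one _ Subtype.val_injective
  | succ t ih =>
    ext i j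
    have hout : ∑ k : {k // ¬ T k}, P i k * (P ^ t) k j = 0 :=
      sum_eq_zero fun k _ => by rw [pow_apply_eq_zero_of_not_of hP t k.2 j.2, mul_zero]
    rw [pow_succ', pow_succ', ← ih, mul_apply, submatrix_apply, mul_apply,
      ← Fintype.sum_subtype_add_sum_subtype T, hout, add_zero]
    rfl

end Restrict

section Stochastic

variable {T : ι → Prop} [DecidablePred T] {M : Matrix ι ι ℝ}

theorem sum_subtype_add_sum_subtype_apply (hM : M ∈ rowStochastic ℝ ι) (i : ι) :
    ∑ k : {k // T k}, M i k + ∑ k : {k // ¬ T k}, M i k = 1 := by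
  rw [Fintype.sum_subtype_add_sum_subtype T, sum_row_of_mem_rowStochastic hM]

theorem sum_subtype_apply_le_one (hM : M ∈ rowStochastic ℝ ι) (i : ι) :
    ∑ k : {k // T k}, M i k ≤ 1 := by
  have hsplit := sum_subtype_add_sum_subtype_apply (T := T) hM i
  have hout : 0 ≤ ∑ k : {k // ¬ T k}, M i k := sum_nonneg fun k _ => hM.1 i k
  linarith

theorem sum_subtype_apply_lt_one (hM : M ∈ rowStochastic ℝ ι) {i j : ι} (hj : ¬ T j)
    (hij : 0 < M i j) : ∑ k : {k // T k}, M i k < 1 := by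
  have hsplit := sum_subtype_add_sum_subtype_apply (T := T) hM i
  have hout : M i j ≤ ∑ k : {k // ¬ T k}, M i k :=
    single_le_sum (f := fun k : {k // ¬ T k} => M i k) (fun k _ => hM.1 i k) (mem_univ ⟨j, hj⟩)
  linarith

end Stochastic

theorem sum_pow_apply_le_pow_div {Q : Matrix ι ι ℝ} {m : ℕ} {c : ℝ}
    (hQ : ∀ t i, ∑ j, (Q ^ t) i j ≤ 1) (hQm : ∀ i j, 0 ≤ (Q ^ m) i j)
    (hc : ∀ i, ∑ j, (Q ^ m) i j ≤ c) (hc0 : 0 ≤ c) (t : ℕ) (i : ι) :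
    ∑ j, (Q ^ t) i j ≤ c ^ (t / m) := by
  induction t using Nat.strong_induction_on generalizing i with
  | _ t ih =>
    rcases Nat.eq_zero_or_pos m with rfl | hm
    · simpa using hQ t i
    rcases lt_or_ge t m with ht | ht
    · simpa [Nat.div_eq_of_lt ht] using hQ t i
    obtain ⟨s, rfl⟩ := Nat.exists_eq_add_of_le ht
    calc ∑ j, (Q ^ (m + s)) i j = ∑ k, (Q ^ m) i k * ∑ j, (Q ^ s) k j := by
          simp only [pow_add, mul_apply, mul_sum]
          exact sum_comm
      _ ≤ ∑ k, (Q ^ m) i k * c ^ (s / m) :=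
          sum_le_sum fun k _ => mul_le_mul_of_nonneg_left (ih s (by omega) k) (hQm i k)
      _ ≤ c * c ^ (s / m) := by
          rw [← sum_mul]
          exact mul_le_mul_of_nonneg_right (hc i) (pow_nonneg hc0 _)
      _ = c ^ ((m + s) / m) := by
          rw [Nat.add_div_left s hm, pow_succ']

theorem summable_pow_of_sum_pow_apply_lt_one {Q : Matrix ι ι ℝ} {m : ℕ} (hm : m ≠ 0)
    (hQ0 : ∀ t i j, 0 ≤ (Q ^ t) i j) (hQ1 : ∀ t i, ∑ j, (Q ^ t) i j ≤ 1)
    (hQm : ∀ i, ∑ j, (Q ^ m) i j < 1) : Summable fun t : ℕ => Q ^ t := by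
  have : Nonempty (Set.Ico (0 : ℝ) 1) := ⟨⟨0, by norm_num⟩⟩
  obtain ⟨⟨c, hc0, hc1⟩, hc⟩ := Finite.exists_le (α := Set.Ico (0 : ℝ) 1)
    fun i => ⟨∑ j, (Q ^ m) i j, sum_nonneg fun j _ => hQ0 m i j, hQm i⟩
  refine Pi.summable.mpr fun i => Pi.summable.mpr fun j => ?_
  refine (summable_pow_div hc0 hc1 hm).of_nonneg_of_le (fun t => hQ0 t i j) fun t => ?_
  calc (Q ^ t) i j ≤ ∑ k, (Q ^ t) i k := single_le_sum (fun k _ => hQ0 t i k) (mem_univ j)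
    _ ≤ c ^ (t / m) := sum_pow_apply_le_pow_div hQ1 (hQ0 m) hc hc0 t i

theorem eq_vecMul_tsum_pow {R : Type*} [Ring R] [TopologicalSpace R] [IsTopologicalRing R]
    [T2Space R] {Q : Matrix ι ι R} (hQ : Summable fun t : ℕ => Q ^ t) {v w : ι → R}
    (hv : v = v ᵥ* Q + w) : v = w ᵥ* ∑' t : ℕ, Q ^ t := by
  have hw : w = v ᵥ* (1 - Q) := by
    rw [vecMul_sub, vecMul_one]
    exact (sub_eq_of_eq_add' hv).symm
  rw [hw, vecMul_vecMul, hQ.one_sub_mul_tsum_pow, vecMul_one]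

end Matrix

namespace Evo

open scoped Matrix

variable {N : ℕ} {p : St N → Event N → ℝ}

instance : DecidablePred (Transient (N := N)) := fun _ => instDecidableAnd

theorem not_transient_iff {x : St N} : ¬ Transient x ↔ x = stA N ∨ x = stB N := by
  rw [Transient, not_and_or, not_not, not_not]

theorem not_transient_const (b : Bool) : ¬ Transient (fun _ : Fin N => b) :=
  not_transient_iff.mpr (by cases b; exacts [Or.inr rfl, Or.inl rfl])

theorem upd_of_not_transient {x : St N} (hx : ¬ Transient x) (e : Event N) : upd e x = x := by
  rcases not_transient_iff.mp hx with rfl | rfl <;> rfl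

theorem foldl_upd_apply (x : St N) (j : Fin N) (es : List (Event N)) :
    es.foldl (fun s e => upd e s) x j = x ((es.map extMap).foldr (· ∘ ·) id j) := by
  induction es generalizing x with
  | nil => rfl
  | cons e es ih => exact ih (upd e x)

theorem tmat_mem_rowStochastic (hp : IsRule p) : tmat p ∈ Matrix.rowStochastic ℝ (St N) := by
  refine Matrix.mem_rowStochastic_iff_sum.mpr ⟨fun x y => ?_, fun x => ?_⟩
  · exact sum_nonneg fun e _ => by split_ifs <;> [exact hp.1 x e; exact le_rfl]
  · simp only [tmat, Matrix.of_apply]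
    rw [sum_comm]
    simpa using hp.2 x

theorem tmat_apply_eq_zero_of_not_transient {x y : St N} (hx : ¬ Transient x)
    (hy : Transient y) : tmat p x y = 0 := by
  have hxy : x ≠ y := fun h => hx (h ▸ hy)
  simp [tmat, upd_of_not_transient hx, hxy]

theorem le_tmat_apply_upd (hp : IsRule p) (x : St N) (e : Event N) :
    p x e ≤ tmat p x (upd e x) := by
  have h := single_le_sum (f := fun e' => if upd e' x = upd e x then p x e' else 0)
    (fun e' _ => by split_ifs <;> [exact hp.1 x e'; exact le_rfl]) (mem_univ e)
  simpa [tmat] using h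

theorem tmat_pow_apply_foldl_pos (hp : IsRule p) (es : List (Event N))
    (hes : ∀ e ∈ es, ∀ x, 0 < p x e) (x : St N) :
    0 < (tmat p ^ es.length) x (es.foldl (fun s e => upd e s) x) := by
  induction es generalizing x with
  | nil => simp
  | cons e es ih =>
    set z := es.foldl (fun s e => upd e s) (upd e x)
    have hP := tmat_mem_rowStochastic hp
    have hstep : 0 < tmat p x (upd e x) * (tmat p ^ es.length) (upd e x) z :=
      mul_pos ((hes e List.mem_cons_self x).trans_le (le_tmat_apply_upd hp x e))
        (ih (fun e' he' => hes e' (List.mem_cons_of_mem e he')) (upd e x))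
    rw [List.length_cons, List.foldl_cons, pow_succ', Matrix.mul_apply]
    exact hstep.trans_le (single_le_sum (f := fun w => tmat p x w * (tmat p ^ es.length) w z)
      (fun w _ => mul_nonneg (hP.1 x w) ((pow_mem hP _).1 w z)) (mem_univ (upd e x)))

theorem FixAxiom.exists_pow_apply_const_pos (hp : IsRule p) (hfix : FixAxiom p) :
    ∃ m ≠ 0, ∀ x : St N, ∃ b, 0 < (tmat p ^ m) x (fun _ => b) := by
  obtain ⟨i, m, ev, hm, hpos, -, hcomp⟩ := hfix
  refine ⟨m, by omega, fun x => ⟨x i, ?_⟩⟩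
  have hend : (List.ofFn ev).foldl (fun s e => upd e s) x = fun _ => x i := by
    funext j
    rw [foldl_upd_apply, List.map_ofFn]
    exact congrArg x (hcomp j)
  simpa [hend] using tmat_pow_apply_foldl_pos hp (List.ofFn ev)
    (fun e he x => by obtain ⟨k, rfl⟩ := List.mem_ofFn.mp he; exact hpos k x) x

abbrev TransientSt (N : ℕ) := {x : St N // Transient x}

def transientBlock (p : St N → Event N → ℝ) : Matrix (TransientSt N) (TransientSt N) ℝ :=
  (tmat p).submatrix Subtype.val Subtype.val

theorem transientBlock_pow (t : ℕ) :
    transientBlock p ^ t = (tmat p ^ t).submatrix Subtype.val Subtype.val :=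
  (Matrix.submatrix_val_pow (fun _ _ => tmat_apply_eq_zero_of_not_transient) t).symm

theorem summable_transientBlock_pow (hp : IsRule p) (hfix : FixAxiom p) :
    Summable fun t : ℕ => transientBlock p ^ t := by
  have hP := tmat_mem_rowStochastic hp
  obtain ⟨m, hm, hpos⟩ := hfix.exists_pow_apply_const_pos hp
  refine Matrix.summable_pow_of_sum_pow_apply_lt_one hm (fun t x y => ?_) (fun t x => ?_)
    (fun x => ?_) <;> simp only [transientBlock_pow, Matrix.submatrix_apply]
  · exact (pow_mem hP t).1 x y
  · exact Matrix.sum_subtype_apply_le_one (pow_mem hP t) x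
  · obtain ⟨b, hb⟩ := hpos x
    exact Matrix.sum_subtype_apply_lt_one (pow_mem hP m) (not_transient_const b) hb

noncomputable def fundamentalMatrix (p : St N → Event N → ℝ) :
    Matrix (TransientSt N) (TransientSt N) ℝ :=
  ∑' t : ℕ, transientBlock p ^ t

theorem sum_eq_sum_transient (f : St N → ℝ) (hf : ∀ x, ¬ Transient x → f x = 0) :
    ∑ x, f x = ∑ x : TransientSt N, f x := by
  have hout : ∑ x : {x : St N // ¬ Transient x}, f x = 0 := sum_eq_zero fun x _ => hf x.1 x.2
  rw [← Fintype.sum_subtype_add_sum_subtype Transient, hout, add_zero]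

variable {ξ : St N} {u : ℝ} {q φ : St N → ℝ}

theorem amend_apply_of_transient {x : St N} (hx : Transient x) (y : St N) :
    amend p ξ u x y = tmat p x y := by
  rw [amend, Matrix.of_apply, if_neg fun h => not_transient_iff.mpr h hx]

theorem amend_apply_of_not_transient {x y : St N} (hx : ¬ Transient x) (hy : Transient y) :
    amend p ξ u x y = if y = ξ then u else 0 := by
  rw [amend, Matrix.of_apply, if_pos (not_transient_iff.mp hx),
    tmat_apply_eq_zero_of_not_transient hx hy, mul_zero]

theorem IsStat.transient_eq_vecMul_add (hq : IsStat (amend p ξ u) q) (hξ : Transient ξ) :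
    (fun y : TransientSt N => q y) = (fun x : TransientSt N => q x) ᵥ* transientBlock p +
      (u * ∑ x : {x : St N // ¬ Transient x}, q x) • Pi.single ⟨ξ, hξ⟩ 1 := by
  funext y
  rw [← hq.2.2 y, ← Fintype.sum_subtype_add_sum_subtype Transient]
  congr 1
  · exact sum_congr rfl fun x _ => by rw [amend_apply_of_transient x.2]; rfl
  · have hout (x : {x : St N // ¬ Transient x}) :
        q x * amend p ξ u x y = q x * if (y : St N) = ξ then u else 0 := by
      rw [amend_apply_of_not_transient x.2 y.2]
    simp only [hout, ← sum_mul, Pi.smul_apply, Pi.single_apply, Subtype.ext_iff, smul_eq_mul]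
    split_ifs <;> ring

theorem IsStat.transient_eq_smul_fundamentalMatrix (hp : IsRule p) (hfix : FixAxiom p)
    (hq : IsStat (amend p ξ u) q) (hξ : Transient ξ) :
    (fun y : TransientSt N => q y) =
      (u * ∑ x : {x : St N // ¬ Transient x}, q x) • fundamentalMatrix p ⟨ξ, hξ⟩ := by
  refine (Matrix.eq_vecMul_tsum_pow (summable_transientBlock_pow hp hfix)
    (hq.transient_eq_vecMul_add hξ)).trans ?_
  rw [Matrix.smul_vecMul, Matrix.single_one_vecMul]
  rfl

theorem hasSum_expectation (hp : IsRule p) (hfix : FixAxiom p) (hξ : Transient ξ)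
    (hφ : ∀ x, ¬ Transient x → φ x = 0) :
    HasSum (fun t : ℕ => ∑ x, (tmat p ^ t) ξ x * φ x)
      (∑ y : TransientSt N, fundamentalMatrix p ⟨ξ, hξ⟩ y * φ y) := by
  have hF := (summable_transientBlock_pow hp hfix).hasSum
  have hterm (t : ℕ) : ∑ x, (tmat p ^ t) ξ x * φ x =
      ∑ y : TransientSt N, (transientBlock p ^ t) ⟨ξ, hξ⟩ y * φ y := by
    rw [sum_eq_sum_transient _ fun x hx => by rw [hφ x hx, mul_zero], transientBlock_pow]
    rfl
  simp only [hterm]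
  exact hasSum_sum fun y _ => (Pi.hasSum.mp (Pi.hasSum.mp hF _) y).mul_right (φ y)

theorem IsStat.expectation_eq (hp : IsRule p) (hfix : FixAxiom p) (hξ : Transient ξ)
    (hφ : ∀ x, ¬ Transient x → φ x = 0) (hq : IsStat (amend p ξ u) q) :
    ∑ x, q x * φ x = u * (∑ y : TransientSt N, fundamentalMatrix p ⟨ξ, hξ⟩ y * φ y) /
      (1 + u * ∑ y : TransientSt N, fundamentalMatrix p ⟨ξ, hξ⟩ y) := by
  set c := ∑ x : {x : St N // ¬ Transient x}, q x
  have hv (y : TransientSt N) : q y = u * c * fundamentalMatrix p ⟨ξ, hξ⟩ y :=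
    congrFun (hq.transient_eq_smul_fundamentalMatrix hp hfix hξ) y
  have hnorm : c * (1 + u * ∑ y : TransientSt N, fundamentalMatrix p ⟨ξ, hξ⟩ y) = 1 := by
    have hsplit := Fintype.sum_subtype_add_sum_subtype Transient q
    rw [hq.2.1] at hsplit
    simp only [hv, ← mul_sum] at hsplit
    linear_combination hsplit
  rw [sum_eq_sum_transient _ fun x hx => by rw [hφ x hx, mul_zero],
    eq_div_iff (right_ne_zero_of_mul_eq_one hnorm)]
  simp only [hv, mul_assoc, ← mul_sum]
  linear_combination (u * ∑ y : TransientSt N, fundamentalMatrix p ⟨ξ, hξ⟩ y * φ y) * hnorm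

theorem hasDerivAt_mul_div_one_add_mul (G K : ℝ) :
    HasDerivAt (fun u : ℝ => u * G / (1 + u * K)) G 0 := by
  have hnum : HasDerivAt (fun u : ℝ => u * G) G 0 := by
    simpa using (hasDerivAt_id (0 : ℝ)).mul_const G
  have hden : HasDerivAt (fun u : ℝ => 1 + u * K) K 0 := by
    simpa using ((hasDerivAt_id (0 : ℝ)).mul_const K).const_add 1
  have h := hnum.div hden (by simp)
  rwa [show (G * (1 + 0 * K) - 0 * G * K) / (1 + 0 * K) ^ 2 = G by simp] at h

/-- for `φ` vanishing on the monoallelic states, the series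
`Σ_t E[φ(x^t) | x⁰ = ξ]` converges absolutely, and the stationary expectation of `φ` in the
amended chain is (one-sidedly) differentiable in `u` at `u = 0` with that series as its
derivative. -/
theorem statement1 {N : ℕ} (p : St N → Event N → ℝ) (hp : IsRule p)
    (hfix : FixAxiom p) (ξ : St N) (hξ : Transient ξ)
    (statDist : ℝ → St N → ℝ)
    (hstat : ∀ u ∈ Set.Ioc (0 : ℝ) 1, IsStat (amend p ξ u) (statDist u))
    (φ : St N → ℝ) (hφA : φ (stA N) = 0) (hφB : φ (stB N) = 0) :
    (Summable fun t : ℕ => |∑ x : St N, (tmat p ^ t) ξ x * φ x|) ∧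
    ∃ f : ℝ → ℝ, (∀ u ∈ Set.Ioc (0 : ℝ) 1, f u = ∑ x : St N, statDist u x * φ x) ∧
      HasDerivWithinAt f (sgen p ξ φ) (Set.Ici 0) 0 := by
  have hφ (x : St N) (hx : ¬ Transient x) : φ x = 0 := by
    rcases not_transient_iff.mp hx with rfl | rfl
    exacts [hφA, hφB]
  have hG := hasSum_expectation hp hfix hξ hφ
  refine ⟨hG.summable.abs, _, fun u hu => ((hstat u hu).expectation_eq hp hfix hξ hφ).symm, ?_⟩
  rw [sgen, hG.tsum_eq]
  exact (hasDerivAt_mul_div_one_add_mul _ _).hasDerivWithinAt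

end Evo
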